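/- Let X be a compact, totally disconnected metric space (equivalently, a compact metric space of covering dimension zero), let A be a unital C*-algebra, let l ≥ 1, and let a, b ∈ C(X, M_l(A))_+. Then a is Cuntz subequivalent to b in C(X, M_l(A)) if and only if a(x) is Cuntz subequivalent to b(x) in M_l(A) for every x ∈ X. -/

import Mathlib

open Filter Topology

/-!
In a first-countable space, `a ≾ b` just says that `a` lies in the closure of
`{c b c* : c}`. Given `ε > 0`, the pointwise hypothesis makes the open sets
`{x | dist (a x) (d b(x) d*) < ε}`, `d ∈ M`, cover `X`. A compact totally disconnected
space admits a locally constant selection `g : X → M` subordinate to any open cover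
(refine it to a finite disjoint clopen cover), and `c := g` is then continuous with
`dist a (c b c*) < ε` in the sup metric.
-/

/-- A positive element of a C*-algebra: one of the form `y* y`. -/
def IsPositiveElem {D : Type*} [Mul D] [Star D] (a : D) : Prop :=
  ∃ y : D, a = star y * y

def CuntzSub {D : Type*} [Mul D] [Star D] [TopologicalSpace D] (a b : D) : Prop :=
  ∃ c : ℕ → D, Tendsto (fun n => c n * b * star (c n)) atTop (nhds a)

theorem exists_isLocallyConstant_forall_mem {ι X : Type*} [TopologicalSpace X]
    [TotallyDisconnectedSpace X] [T2Space X] [CompactSpace X] {U : ι → Set X}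
    (hU : ∀ i, IsOpen (U i)) (hcover : ∀ x, ∃ i, x ∈ U i) :
    ∃ g : X → ι, IsLocallyConstant g ∧ ∀ x, x ∈ U (g x) := by
  have hUcover : TopologicalSpace.IsOpenCover fun i ↦ (⟨U i, hU i⟩ : TopologicalSpace.Opens X) :=
    .of_sets hU (Set.eq_univ_of_forall fun x ↦ Set.mem_iUnion.2 (hcover x))
  obtain ⟨n, W, hW, hWcover, hWdisj⟩ := hUcover.exists_finite_nonempty_disjoint_clopen_cover
  choose i hi using fun j ↦ (hW j).2
  choose piece hpiece using fun x ↦ Set.mem_iUnion.1 (hWcover (Set.mem_univ x))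
  have piece_preimage (j : Fin n) : piece ⁻¹' {j} = W j := by
    ext x
    refine ⟨fun hx ↦ hx ▸ hpiece x, fun hx ↦ hWdisj.eq ?_⟩
    simpa [← TopologicalSpace.Clopens.coe_disjoint, Set.not_disjoint_iff] using ⟨x, hpiece x, hx⟩
  have piece_locallyConstant : IsLocallyConstant piece :=
    IsLocallyConstant.iff_isOpen_fiber.2 fun j ↦ piece_preimage j ▸ (W j).isOpen
  exact ⟨i ∘ piece, piece_locallyConstant.comp i, fun x ↦ hi _ (hpiece x)⟩

theorem cuntzSub_iff_mem_closure {D : Type*} [Mul D] [Star D] [TopologicalSpace D]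
    [FrechetUrysohnSpace D] {a b : D} :
    CuntzSub a b ↔ a ∈ closure (Set.range fun c ↦ c * b * star c) := by
  simp only [mem_closure_iff_seq_limit, Set.mem_range]
  constructor
  · rintro ⟨c, hc⟩
    exact ⟨_, fun n ↦ ⟨c n, rfl⟩, hc⟩
  · rintro ⟨y, hy, hlim⟩
    choose c hc using hy
    exact ⟨c, by simpa only [hc] using hlim⟩

theorem CuntzSub.apply {X M : Type*} [TopologicalSpace X] [TopologicalSpace M] [Mul M] [Star M]
    [ContinuousMul M] [ContinuousStar M] {a b : C(X, M)} (h : CuntzSub a b) (x : X) :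
    CuntzSub (a x) (b x) :=
  let ⟨c, hc⟩ := h
  ⟨fun n ↦ c n x, ((continuous_eval_const x).tendsto a).comp hc⟩

theorem cuntzSub_iff_forall_cuntzSub_apply {X M : Type*} [TopologicalSpace X]
    [TotallyDisconnectedSpace X] [T2Space X] [CompactSpace X] [PseudoMetricSpace M] [Mul M]
    [Star M] [ContinuousMul M] [ContinuousStar M] {a b : C(X, M)} :
    CuntzSub a b ↔ ∀ x, CuntzSub (a x) (b x) := by
  refine ⟨CuntzSub.apply, fun h ↦ ?_⟩
  simp only [cuntzSub_iff_mem_closure, Metric.mem_closure_iff, Set.exists_range_iff] at h ⊢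
  intro ε hε
  let U (d : M) : Set X := {x | dist (a x) (d * b x * star d) < ε}
  have hU (d : M) : IsOpen (U d) := isOpen_lt (by fun_prop) continuous_const
  obtain ⟨g, hg, hgU⟩ := exists_isLocallyConstant_forall_mem hU fun x ↦ h x ε hε
  exact ⟨⟨g, hg.continuous⟩, (ContinuousMap.dist_lt_iff hε).2 hgU⟩

theorem cuntzSub_iff_pointwise_of_totallyDisconnected (X : Type*) [MetricSpace X]
    [CompactSpace X] [TotallyDisconnectedSpace X] (A : Type*) [CStarAlgebra A]
    (l : ℕ) (a b : C(X, Matrix (Fin l) (Fin l) A)) :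
    CuntzSub a b ↔ ∀ x : X, CuntzSub (a x) (b x) := by
  -- `Matrix` has no global metric; the sup metric induces its (product) topology.
  let : PseudoMetricSpace (Matrix (Fin l) (Fin l) A) :=
    inferInstanceAs (PseudoMetricSpace (Fin l → Fin l → A))
  exact cuntzSub_iff_forall_cuntzSub_apply
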